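/- Let ξ be the output of the Deodhar minimal lift procedure with inputs p, Y, w (with {w_1,...,w_p} ≤ Y). Then for i ≠ p with w_i < w_{i+1}, we have ξ_i < ξ_{i+1}; equivalently Des(ξ) ⊆ Des(w) ∪ {p}. Moreover, if w' is another permutation with w'_i = w_i for all i ≤ N and {w'_1,...,w'_p} ≤ Y, and ξ' is the output for inputs p, Y, w', then ξ'_i = ξ_i for all i ≤ N. -/

import Mathlib

/-!
Write `A_j = {w_1, …, w_j}` and `B_j = {ξ_1, …, ξ_j}`. For `j ≤ p` each `ξ_j` is a minimum over
`Y \ B_{j-1}` cut off below at `w_j`; an ascent `w_i < w_{i+1}` shrinks that set, and `ξ_i` is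
removed from it, so `ξ_i < ξ_{i+1}`. For `j ≥ p` one shows by induction that `A_j ≤ B_j` in the
dominance order and that the subroutine inserts `ξ_j = ã'_q` into `B_{j-1}` exactly at position `q`.
Dominance `A_{i-1} ≤ B_{i-1}` forces `ξ_i ≤ w_i`, so after an ascent `ξ_i` still has exactly `q - 1`
smaller elements in `A_{i+1}`; hence position `q + 1` qualifies at step `i + 1`, the new index is
`> q`, and `ξ_{i+1} > ξ_i`. The second statement holds because `ξ_j` depends only on
`w_1, …, w_j` and `ξ_1, …, ξ_{j-1}`, the index `q` being unique by maximality.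
-/

/-- Dominance order on equal-cardinality finite sets of naturals:
the i-th smallest element of `E` is at most the i-th smallest element of `F`. -/
def Dom (E F : Finset ℕ) : Prop :=
  List.Forall₂ (· ≤ ·) (Finset.sort E (· ≤ ·)) (Finset.sort F (· ≤ ·))

/-- The k-th smallest element of `E` (1-based), with junk value 0 out of range. -/
def nth (E : Finset ℕ) (k : ℕ) : ℕ := (Finset.sort E (· ≤ ·)).getD (k - 1) 0

/-- The (0-based) level of `e` in `E`: its index in the increasing enumeration. -/
def level (e : ℕ) (E : Finset ℕ) : ℕ := List.idxOf e (Finset.sort E (· ≤ ·))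

/-- The Bruhat order, via the tableau criterion, on permutations of `[n] = {1,...,n}`
given in one-line notation as functions `ℕ → ℕ`. -/
def Bruhat (n : ℕ) (v w : ℕ → ℕ) : Prop :=
  ∀ i ≤ n, Dom ((Finset.Icc 1 i).image v) ((Finset.Icc 1 i).image w)

/-- `MinLift n p Y w ξ` says that `ξ` (in one-line notation, as a function `ℕ → ℕ`) is
produced by the Deodhar minimal lift procedure from inputs `p`, `Y`, `w`:
for `j ≤ p`, `ξ_j` is the least element of `Y \ {ξ_1,...,ξ_{j-1}}` that is `≥ w_j`;
for `p < j ≤ n`, `ξ_j` is the output of the subroutine applied with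
`A = {w_1,...,w_{j-1}}`, `B = {ξ_1,...,ξ_{j-1}}`, `γ = w_j` (so `A ∪ {γ} = {w_1,...,w_j}`):
`q` is maximal in `{1,...,j}` with `ã'_q > b̃_{q-1}` (with `b̃_0 = 0`, so `q = 1` qualifies
vacuously), and `ξ_j = ã'_q`. -/
def MinLift (n p : ℕ) (Y : Finset ℕ) (w ξ : ℕ → ℕ) : Prop :=
  (∀ j, 1 ≤ j → j ≤ p →
    ((Y \ ((Finset.Icc 1 (j - 1)).image ξ)).filter (fun y => w j ≤ y)).min = (ξ j : WithTop ℕ)) ∧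
  (∀ j, p < j → j ≤ n → ∃ q, 1 ≤ q ∧ q ≤ j ∧
    (q = 1 ∨ nth ((Finset.Icc 1 j).image w) q > nth ((Finset.Icc 1 (j - 1)).image ξ) (q - 1)) ∧
    (∀ r, q < r → r ≤ j →
      nth ((Finset.Icc 1 j).image w) r ≤ nth ((Finset.Icc 1 (j - 1)).image ξ) (r - 1)) ∧
    ξ j = nth ((Finset.Icc 1 j).image w) q)

open Finset

lemma finite_setOf_mem (E : Finset ℕ) : (Set.ofPred (· ∈ E)).Finite := E.finite_toSet

lemma toFinset_finite_setOf_mem (E : Finset ℕ) : (finite_setOf_mem E).toFinset = E := by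
  ext; simp

lemma nth_eq_nat_nth (E : Finset ℕ) (k : ℕ) : nth E k = Nat.nth (· ∈ E) (k - 1) := by
  rw [Nat.nth_eq_getD_sort (finite_setOf_mem E), toFinset_finite_setOf_mem, nth]

section SortedNth

variable {E F : Finset ℕ} {k m t e a : ℕ}

lemma nth_mem (hk1 : 1 ≤ k) (hk : k ≤ #E) : nth E k ∈ E := by
  rw [nth_eq_nat_nth]
  exact Nat.nth_mem_of_lt_card (finite_setOf_mem E) (by rw [toFinset_finite_setOf_mem]; omega)

lemma nth_lt_nth (hk1 : 1 ≤ k) (hkm : k < m) (hm : m ≤ #E) : nth E k < nth E m := by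
  rw [nth_eq_nat_nth, nth_eq_nat_nth]
  exact Nat.nth_lt_nth_of_lt_card _ (by omega) (by rw [toFinset_finite_setOf_mem]; omega)

lemma nth_le_nth (hk1 : 1 ≤ k) (hkm : k ≤ m) (hm : m ≤ #E) : nth E k ≤ nth E m := by
  rw [nth_eq_nat_nth, nth_eq_nat_nth]
  exact Nat.nth_le_nth_of_lt_card _ (by omega) (by rw [toFinset_finite_setOf_mem]; omega)

lemma count_le_card (t : ℕ) : Nat.count (· ∈ E) t ≤ #E := by
  simpa only [toFinset_finite_setOf_mem] using Nat.count_le_card (finite_setOf_mem E) t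

lemma count_nth (hk1 : 1 ≤ k) (hk : k ≤ #E) : Nat.count (· ∈ E) (nth E k) = k - 1 := by
  rw [nth_eq_nat_nth]
  exact Nat.count_nth_of_lt_card_finite _ (by rw [toFinset_finite_setOf_mem]; omega)

lemma nth_count_add_one (he : e ∈ E) : nth E (Nat.count (· ∈ E) e + 1) = e := by
  rw [nth_eq_nat_nth, Nat.add_sub_cancel]
  exact Nat.nth_count he

lemma nth_lt_iff_le_count (hk1 : 1 ≤ k) (hk : k ≤ #E) :
    nth E k < t ↔ k ≤ Nat.count (· ∈ E) t := by
  refine ⟨fun h => ?_, fun h => ?_⟩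
  · calc k = Nat.count (· ∈ E) (nth E k + 1) := by
          rw [Nat.count_succ, count_nth hk1 hk, if_pos (nth_mem hk1 hk)]; omega
      _ ≤ Nat.count (· ∈ E) t := Nat.count_monotone _ h
  · rw [nth_eq_nat_nth]
    exact Nat.nth_lt_of_lt_count (by omega)

lemma count_le_count_of_subset (h : E ⊆ F) (t : ℕ) :
    Nat.count (· ∈ E) t ≤ Nat.count (· ∈ F) t :=
  Nat.count_mono_left fun _ _ he => h he

lemma count_insert (ha : a ∉ E) (t : ℕ) :
    Nat.count (· ∈ insert a E) t = Nat.count (· ∈ E) t + if a < t then 1 else 0 := by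
  simp only [Nat.count_eq_card_filter_range, mem_insert, filter_or, filter_eq', mem_range]
  split_ifs
  · rw [card_union_of_disjoint (by simpa using fun _ => ha), card_singleton, add_comm]
  · simp

lemma dom_iff_forall_nth_le :
    Dom E F ↔ #E = #F ∧ ∀ k, 1 ≤ k → k ≤ #E → nth E k ≤ nth F k := by
  simp only [Dom, List.forall₂_iff_get, length_sort, nth]
  refine and_congr_right fun hc => ⟨fun h k hk1 hk => ?_, fun h i hiE hiF => ?_⟩
  · rw [List.getD_eq_getElem _ _ (by simp; omega), List.getD_eq_getElem _ _ (by simp; omega)]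
    exact h (k - 1) (by omega) (by omega)
  · have := h (i + 1) (by omega) (by omega)
    rwa [Nat.add_sub_cancel, List.getD_eq_getElem _ _ (by simp; omega),
      List.getD_eq_getElem _ _ (by simp; omega)] at this

lemma dom_iff_forall_count_le :
    Dom E F ↔ #E = #F ∧ ∀ t, Nat.count (· ∈ F) t ≤ Nat.count (· ∈ E) t := by
  rw [dom_iff_forall_nth_le]
  refine and_congr_right fun hc => ⟨fun h t => ?_, fun h k hk1 hk => ?_⟩
  · obtain h0 | hpos := Nat.eq_zero_or_pos (Nat.count (· ∈ F) t)
    · omega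
    have hF : nth F (Nat.count (· ∈ F) t) < t :=
      (nth_lt_iff_le_count hpos (count_le_card t)).2 le_rfl
    exact (nth_lt_iff_le_count hpos (hc ▸ count_le_card t)).1
      ((h _ hpos (hc ▸ count_le_card t)).trans_lt hF)
  · have hF := (nth_lt_iff_le_count hk1 (hc ▸ hk)).1 (Nat.lt_succ_self (nth F k))
    exact Nat.lt_succ_iff.1 ((nth_lt_iff_le_count hk1 hk).2 (hF.trans (h _)))

end SortedNth

lemma card_image_Icc_of_injOn {n j : ℕ} {f : ℕ → ℕ} (hf : Set.InjOn f (Set.Icc 1 n))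
    (hj : j ≤ n) : #((Icc 1 j).image f) = j := by
  rw [card_image_of_injOn (hf.mono (by simpa using Set.Icc_subset_Icc_right hj)), Nat.card_Icc,
    Nat.add_sub_cancel]

lemma apply_add_one_notMem_image_Icc {n j : ℕ} {f : ℕ → ℕ} (hf : Set.InjOn f (Set.Icc 1 n))
    (hj : j + 1 ≤ n) : f (j + 1) ∉ (Icc 1 j).image f := by
  simp only [mem_image, mem_Icc, not_exists, not_and]
  intro i hi he
  have := hf ⟨hi.1, by omega⟩ ⟨by omega, hj⟩ he
  omega

lemma image_Icc_add_one (f : ℕ → ℕ) (j : ℕ) :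
    (Icc 1 (j + 1)).image f = insert (f (j + 1)) ((Icc 1 j).image f) := by
  rw [← insert_Icc_right_eq_Icc_add_one (by omega), image_insert]

/-- `q` is the index chosen by the subroutine when `ã'` enumerates `A` and `b̃` enumerates `B`.
Since `nth B 0 = nth B 1` (truncated subtraction), `b̃_0 = 0` is modelled by the case `q = 1`. -/
def IsLiftIndex (A B : Finset ℕ) (j q : ℕ) : Prop :=
  1 ≤ q ∧ q ≤ j ∧ (q = 1 ∨ nth A q > nth B (q - 1)) ∧
    ∀ r, q < r → r ≤ j → nth A r ≤ nth B (r - 1)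

namespace IsLiftIndex

variable {A B E : Finset ℕ} {j q r g : ℕ}

lemma le_of_lt (h : IsLiftIndex A B j q) (hrj : r ≤ j) (hr : r = 1 ∨ nth A r > nth B (r - 1)) :
    r ≤ q := by
  by_contra! hqr
  rcases hr with rfl | hr
  · exact absurd h.1 (by omega)
  · exact absurd (h.2.2.2 r hqr hrj) (not_le.2 hr)

lemma unique (h : IsLiftIndex A B j q) (h' : IsLiftIndex A B j r) : q = r :=
  le_antisymm (h'.le_of_lt h.2.1 h.2.2.1) (h.le_of_lt h'.2.1 h'.2.2.1)

lemma sub_one_le_count (h : IsLiftIndex A B j q) (hB : #B = j - 1) :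
    q - 1 ≤ Nat.count (· ∈ B) (nth A q) := by
  obtain ⟨hq1, hqj, hq | hq, -⟩ := h
  · omega
  · obtain hq2 | hq2 := Nat.lt_or_ge q 2
    · omega
    · exact (nth_lt_iff_le_count (by omega) (by omega)).1 hq

lemma count_nth_add_one_le (h : IsLiftIndex A B j q) (hA : #A = j) (hB : #B = j - 1) :
    Nat.count (· ∈ B) (nth A q + 1) ≤ q - 1 := by
  obtain ⟨hq1, hqj, -, hmax⟩ := h
  by_contra! hlt
  have hqB : q ≤ #B := by have := count_le_card (E := B) (nth A q + 1); omega
  have hBq : nth B q < nth A q + 1 := (nth_lt_iff_le_count hq1 hqB).2 (by omega)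
  have hAB : nth A (q + 1) ≤ nth B q := hmax (q + 1) (by omega) (by omega)
  have hAA : nth A q < nth A (q + 1) := nth_lt_nth hq1 (by omega) (by omega)
  omega

lemma nth_notMem (h : IsLiftIndex A B j q) (hA : #A = j) (hB : #B = j - 1) : nth A q ∉ B := by
  intro hmem
  have := h.count_nth_add_one_le hA hB
  rw [Nat.count_succ, if_pos hmem] at this
  have := h.sub_one_le_count hB
  omega

lemma count_nth (h : IsLiftIndex A B j q) (hA : #A = j) (hB : #B = j - 1) :
    Nat.count (· ∈ B) (nth A q) = q - 1 := by
  have := h.count_nth_add_one_le hA hB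
  rw [Nat.count_succ, if_neg (h.nth_notMem hA hB)] at this
  exact le_antisymm this (h.sub_one_le_count hB)

lemma nth_insert_nth (h : IsLiftIndex A B j q) (hA : #A = j) (hB : #B = j - 1) :
    nth (insert (nth A q) B) q = nth A q := by
  have hc : Nat.count (· ∈ insert (nth A q) B) (nth A q) = q - 1 := by
    rw [count_insert (h.nth_notMem hA hB), if_neg (lt_irrefl _), h.count_nth hA hB, add_zero]
  have := nth_count_add_one (mem_insert_self (nth A q) B)
  rwa [hc, Nat.sub_add_cancel h.1] at this

lemma count_insert_nth_le (h : IsLiftIndex A B j q) (hA : #A = j) (hB : #B = j - 1)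
    (hBA : ∀ t, Nat.count (· ∈ B) t ≤ Nat.count (· ∈ A) t) (t : ℕ) :
    Nat.count (· ∈ insert (nth A q) B) t ≤ Nat.count (· ∈ A) t := by
  have hq1 := h.1
  have hqj := h.2.1
  rw [count_insert (h.nth_notMem hA hB)]
  split_ifs with hxt
  · set c := Nat.count (· ∈ B) t
    obtain hcq | hcq := Nat.lt_or_ge c q
    · have := (nth_lt_iff_le_count hq1 (by omega)).1 hxt
      omega
    · have hcB : c ≤ #B := count_le_card t
      have hBc : nth B c < t := (nth_lt_iff_le_count (by omega) hcB).2 le_rfl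
      have hAB : nth A (c + 1) ≤ nth B c := h.2.2.2 (c + 1) (by omega) (by omega)
      exact (nth_lt_iff_le_count (by omega) (by omega)).1 (hAB.trans_lt hBc)
  · simpa using hBA t

lemma nth_le_of_count_le (h : IsLiftIndex A B j q) (hA : #A = j) (hB : #B = j - 1)
    (hg : g ∉ E) (hAE : A = insert g E)
    (hBE : ∀ t, Nat.count (· ∈ B) t ≤ Nat.count (· ∈ E) t) :
    nth A q ≤ g := by
  subst hAE
  by_contra! hgx
  have hcA := _root_.count_nth h.1 (hA ▸ h.2.1 : q ≤ #(insert g E))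
  rw [count_insert hg, if_pos hgx] at hcA
  have := hBE (nth (insert g E) q)
  rw [h.count_nth hA hB] at this
  omega

end IsLiftIndex

namespace MinLift

variable {n p j : ℕ} {Y : Finset ℕ} {w ξ : ℕ → ℕ}

lemma isLeast (hξ : MinLift n p Y w ξ) (hjp : j + 1 ≤ p) :
    IsLeast {y | y ∈ Y ∧ y ∉ (Icc 1 j).image ξ ∧ w (j + 1) ≤ y} (ξ (j + 1)) := by
  have hmin := hξ.1 (j + 1) (by omega) hjp
  rw [Nat.add_sub_cancel] at hmin
  refine ⟨by simpa [and_assoc] using mem_of_min hmin, fun y hy => ?_⟩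
  have := hmin ▸ min_le (s := {y ∈ Y \ (Icc 1 j).image ξ | w (j + 1) ≤ y})
    (by simpa [and_assoc] using hy)
  exact WithTop.coe_le_coe.1 this

lemma image_Icc_subset_and_card (hξ : MinLift n p Y w ξ) (hjp : j ≤ p) :
    (Icc 1 j).image ξ ⊆ Y ∧ #((Icc 1 j).image ξ) = j := by
  induction j with
  | zero => simp
  | succ j ih =>
    obtain ⟨hsub, hcard⟩ := ih (by omega)
    obtain ⟨⟨hY, hB, -⟩, -⟩ := hξ.isLeast hjp
    rw [image_Icc_add_one]
    exact ⟨insert_subset hY hsub, by rw [card_insert_of_notMem hB, hcard]⟩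

lemma image_Icc_eq (hξ : MinLift n p Y w ξ) (hYc : #Y = p) : (Icc 1 p).image ξ = Y :=
  have h := hξ.image_Icc_subset_and_card le_rfl
  eq_of_subset_of_card_le h.1 (by omega)

lemma exists_isLiftIndex (hξ : MinLift n p Y w ξ) (hpj : p < j + 1) (hjn : j + 1 ≤ n) :
    ∃ q, IsLiftIndex ((Icc 1 (j + 1)).image w) ((Icc 1 j).image ξ) (j + 1) q ∧
      ξ (j + 1) = nth ((Icc 1 (j + 1)).image w) q := by
  obtain ⟨q, hq1, hqj, hgt, hmax, hval⟩ := hξ.2 (j + 1) hpj hjn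
  rw [Nat.add_sub_cancel] at hgt hmax
  exact ⟨q, ⟨hq1, hqj, hgt, hmax⟩, hval⟩

lemma card_image_Icc_and_dom (hw : Set.InjOn w (Set.Icc 1 n)) (hYc : #Y = p)
    (hdom : Dom ((Icc 1 p).image w) Y) (hξ : MinLift n p Y w ξ) (hpj : p ≤ j) (hjn : j ≤ n) :
    #((Icc 1 j).image ξ) = j ∧ Dom ((Icc 1 j).image w) ((Icc 1 j).image ξ) := by
  induction j, hpj using Nat.le_induction with
  | base => rw [hξ.image_Icc_eq hYc]; exact ⟨hYc, hdom⟩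
  | succ j hpj ih =>
    obtain ⟨hcard, hD⟩ := ih (by omega)
    obtain ⟨q, hq, hval⟩ := hξ.exists_isLiftIndex (by omega) hjn
    have hA := card_image_Icc_of_injOn hw hjn
    have hB : #((Icc 1 j).image ξ) = j + 1 - 1 := hcard
    have hBA (t : ℕ) : Nat.count (· ∈ (Icc 1 j).image ξ) t ≤
        Nat.count (· ∈ (Icc 1 (j + 1)).image w) t :=
      ((dom_iff_forall_count_le.1 hD).2 t).trans <|
        count_le_count_of_subset (image_subset_image (Icc_subset_Icc_right (by omega))) t
    rw [image_Icc_add_one ξ, hval]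
    have hcard' : #(insert (nth ((Icc 1 (j + 1)).image w) q) ((Icc 1 j).image ξ)) = j + 1 := by
      rw [card_insert_of_notMem (hq.nth_notMem hA hB), hcard]
    exact ⟨hcard', dom_iff_forall_count_le.2
      ⟨hA.trans hcard'.symm, hq.count_insert_nth_le hA hB hBA⟩⟩

lemma apply_lt_apply_add_one_of_lt (hξ : MinLift n p Y w ξ) {i : ℕ} (hi1 : 1 ≤ i)
    (hip : i < p) (hlt : w i < w (i + 1)) : ξ i < ξ (i + 1) := by
  obtain ⟨k, rfl⟩ : ∃ k, i = k + 1 := ⟨i - 1, by omega⟩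
  obtain ⟨⟨hY, hB, hw⟩, -⟩ := hξ.isLeast (j := k + 1) hip
  have hne : ξ (k + 1) ≠ ξ (k + 1 + 1) := fun he =>
    hB (he ▸ mem_image_of_mem ξ (by simp))
  have hle : ξ (k + 1) ≤ ξ (k + 1 + 1) := (hξ.isLeast (j := k) (by omega)).2
    ⟨hY, fun hm => hB (image_subset_image (Icc_subset_Icc_right (by omega)) hm),
      hlt.le.trans hw⟩
  omega

lemma apply_lt_apply_add_one_of_gt (hw : Set.InjOn w (Set.Icc 1 n)) (hYc : #Y = p)
    (hdom : Dom ((Icc 1 p).image w) Y) (hξ : MinLift n p Y w ξ) {i : ℕ} (hpi : p < i)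
    (hin : i + 1 ≤ n) (hlt : w i < w (i + 1)) : ξ i < ξ (i + 1) := by
  obtain ⟨k, rfl⟩ : ∃ k, i = k + 1 := ⟨i - 1, by omega⟩
  obtain ⟨q, hq, hx⟩ := hξ.exists_isLiftIndex (by omega) (by omega)
  obtain ⟨q', hq', hx'⟩ := hξ.exists_isLiftIndex (j := k + 1) (by omega) hin
  have hq1 := hq.1
  have hqk := hq.2.1
  have hq'k := hq'.2.1
  have hA := card_image_Icc_of_injOn hw (j := k + 1) (by omega)
  have hA' := card_image_Icc_of_injOn hw hin
  obtain ⟨hB, hD⟩ := hξ.card_image_Icc_and_dom hw hYc hdom (j := k) (by omega) (by omega)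
  have hxw : ξ (k + 1) ≤ w (k + 1) := hx ▸ hq.nth_le_of_count_le hA hB
    (apply_add_one_notMem_image_Icc hw (by omega)) (image_Icc_add_one w k)
    (dom_iff_forall_count_le.1 hD).2
  have hcount : Nat.count (· ∈ (Icc 1 (k + 1 + 1)).image w) (ξ (k + 1) + 1) = q := by
    rw [image_Icc_add_one w (k + 1), count_insert (apply_add_one_notMem_image_Icc hw hin),
      if_neg (by omega), Nat.count_succ, hx, count_nth hq1 (by omega),
      if_pos (nth_mem hq1 (by omega))]
    omega
  have hB' : nth ((Icc 1 (k + 1)).image ξ) q = ξ (k + 1) := by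
    rw [image_Icc_add_one ξ k, hx]
    exact hq.nth_insert_nth hA hB
  have hgt : ξ (k + 1) < nth ((Icc 1 (k + 1 + 1)).image w) (q + 1) := by
    by_contra! hle
    have := (nth_lt_iff_le_count (by omega) (by omega)).1 (Nat.lt_add_one_iff.2 hle)
    omega
  have hqq : q + 1 ≤ q' := hq'.le_of_lt (by omega) (Or.inr (by simpa [hB'] using hgt))
  calc ξ (k + 1) < nth ((Icc 1 (k + 1 + 1)).image w) (q + 1) := hgt
    _ ≤ nth ((Icc 1 (k + 1 + 1)).image w) q' := nth_le_nth (by omega) hqq (by omega)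
    _ = ξ (k + 1 + 1) := hx'.symm

lemma apply_add_one_eq_of_eqOn {w' ξ' : ℕ → ℕ} (hξ : MinLift n p Y w ξ)
    (hξ' : MinLift n p Y w' ξ') (hjn : j + 1 ≤ n) (hw : Set.EqOn w' w (Set.Icc 1 (j + 1)))
    (hξξ' : Set.EqOn ξ' ξ (Set.Icc 1 j)) : ξ' (j + 1) = ξ (j + 1) := by
  have hB : (Icc 1 j).image ξ' = (Icc 1 j).image ξ := image_congr (by rwa [coe_Icc])
  have hA : (Icc 1 (j + 1)).image w' = (Icc 1 (j + 1)).image w := image_congr (by rwa [coe_Icc])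
  obtain hjp | hpj := le_or_gt (j + 1) p
  · have h' := hξ'.isLeast hjp
    rw [hB, hw ⟨by omega, le_rfl⟩] at h'
    exact h'.unique (hξ.isLeast hjp)
  · obtain ⟨q, hq, hx⟩ := hξ.exists_isLiftIndex hpj hjn
    obtain ⟨q', hq', hx'⟩ := hξ'.exists_isLiftIndex hpj hjn
    rw [hA, hB] at hq'
    rw [hx', hx, hA, hq.unique hq']

lemma eqOn_of_eqOn {N : ℕ} {w' ξ' : ℕ → ℕ} (hξ : MinLift n p Y w ξ)
    (hξ' : MinLift n p Y w' ξ') (hN : N ≤ n) (hw : Set.EqOn w' w (Set.Icc 1 N)) :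
    Set.EqOn ξ' ξ (Set.Icc 1 N) := by
  induction N with
  | zero => simp
  | succ N ih =>
    have ih' := ih (by omega) (hw.mono (Set.Icc_subset_Icc_right (by omega)))
    rintro i ⟨hi1, hiN⟩
    obtain rfl | hlt := eq_or_lt_of_le hiN
    · exact hξ.apply_add_one_eq_of_eqOn hξ' hN hw ih'
    · exact ih' ⟨hi1, by omega⟩

end MinLift

theorem stmt18_general (n p N : ℕ) (hN : N ≤ n) (w w' ξ ξ' : ℕ → ℕ)
    (hw : Set.BijOn w (Set.Icc 1 n) (Set.Icc 1 n))
    (Y : Finset ℕ) (hYc : Y.card = p)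
    (hdom : Dom ((Finset.Icc 1 p).image w) Y)
    (hξ : MinLift n p Y w ξ) (hξ' : MinLift n p Y w' ξ') :
    (∀ i, 1 ≤ i → i + 1 ≤ n → i ≠ p → w i < w (i + 1) → ξ i < ξ (i + 1)) ∧
    ((∀ i, 1 ≤ i → i ≤ N → w' i = w i) → ∀ i, 1 ≤ i → i ≤ N → ξ' i = ξ i) := by
  refine ⟨fun i hi1 hin hip hlt => ?_, fun hww i hi1 hiN => ?_⟩
  · obtain hip | hpi := hip.lt_or_gt
    · exact hξ.apply_lt_apply_add_one_of_lt hi1 hip hlt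
    · exact hξ.apply_lt_apply_add_one_of_gt hw.injOn hYc hdom hpi hin hlt
  · exact hξ.eqOn_of_eqOn hξ' hN (fun i hi => hww i hi.1 hi.2) ⟨hi1, hiN⟩

theorem stmt18 (n p N : ℕ) (hp : p ≤ n) (hN : N ≤ n) (w w' ξ ξ' : ℕ → ℕ)
    (hw : Set.BijOn w (Set.Icc 1 n) (Set.Icc 1 n))
    (hw' : Set.BijOn w' (Set.Icc 1 n) (Set.Icc 1 n))
    (Y : Finset ℕ) (hYs : Y ⊆ Finset.Icc 1 n) (hYc : Y.card = p)
    (hdom : Dom ((Finset.Icc 1 p).image w) Y)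
    (hdom' : Dom ((Finset.Icc 1 p).image w') Y)
    (hξ : MinLift n p Y w ξ) (hξ' : MinLift n p Y w' ξ') :
    (∀ i, 1 ≤ i → i + 1 ≤ n → i ≠ p → w i < w (i + 1) → ξ i < ξ (i + 1)) ∧
    ((∀ i, 1 ≤ i → i ≤ N → w' i = w i) → ∀ i, 1 ≤ i → i ≤ N → ξ' i = ξ i) :=
  stmt18_general n p N hN w w' ξ ξ' hw Y hYc hdom hξ hξ'
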